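/- arXiv:2504.13809 — 6 statements merged into one kernel-verified Lean document; each statement's English description precedes it below -/
import Mathlib

section
/- Let A be a real m×n matrix and let 1 ≤ k < min(m, n). Let σ_{k+1}(A) := inf{‖A − B‖₂ : B is a real m×n matrix with rank B ≤ k} denote the (k+1)-st largest singular value of A. Then there exist a set J of k column indices of A, a real k×n matrix R with all entries of absolute value at most 1, and an n×n permutation matrix P such that ‖A − A_{:,J} R P‖₂ ≤ σ_{k+1}(A) · √(1 + k(n − k)), where A_{:,J} denotes the m×k submatrix of A consisting of the columns indexed by J. -/
/-- Spectral norm (ℓ²-operator norm) of a real matrix. -/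
noncomputable def specNorm {m n : ℕ} (A : Matrix (Fin m) (Fin n) ℝ) : ℝ :=
  ‖LinearMap.toContinuousLinearMap (Matrix.toEuclideanLin A)‖

/-!
Fix `B` of rank at most `k` and write `B = C X` with `X` a `k × n` matrix of rank `k`. Choose the
columns `J` of `X` maximising `|det X_J|` and put `R = X_J⁻¹ X`: by Cramer's rule `|R i j| ≤ 1`,
and `B_J R = B`. With `S` the `n × k` matrix selecting the columns `J`, this gives
`A - A_J R = (A - B)(I - S R)`. Since `R_J = I`, the vector `(I - S R) w` has the entries
`-∑_{j ∉ J} R i j w j` at the positions `J i` and agrees with `w` elsewhere, so Cauchy–Schwarz gives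
`‖I - S R‖₂² ≤ 1 + k (n - k)`. A minimiser of `‖A - A_J R‖₂` over the compact set of admissible
pairs `(J, R)` then works for all `B` at once, with `P = I`.
-/

open Matrix Finset Module Submodule

theorem Submodule.exists_le_finrank_eq {K V : Type*} [Field K] [AddCommGroup V] [Module K V]
    [FiniteDimensional K V] (W : Submodule K V) {k : ℕ} (hWk : finrank K W ≤ k)
    (hk : k ≤ finrank K V) : ∃ U : Submodule K V, W ≤ U ∧ finrank K U = k := by
  induction k, hWk using Nat.le_induction with
  | base => exact ⟨W, le_rfl, rfl⟩
  | succ j _ ih =>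
    obtain ⟨U, hWU, hU⟩ := ih (by omega)
    obtain ⟨v, -, hv⟩ : ∃ v ∈ (⊤ : Submodule K V), v ∉ U :=
      SetLike.exists_of_lt (U.lt_top_of_finrank_lt_finrank (by omega))
    exact ⟨U ⊔ K ∙ v, hWU.trans le_sup_left, by rw [finrank_sup_span_singleton hv, hU]⟩

section LinearAlgebra

variable {K : Type*} [Field K] {k n : ℕ}

theorem Matrix.exists_eq_mul_of_rank_le {m : ℕ} (B : Matrix (Fin m) (Fin n) K) (hB : B.rank ≤ k)
    (hkn : k ≤ n) :
    ∃ (C : Matrix (Fin m) (Fin k) K) (X : Matrix (Fin k) (Fin n) K), X.rank = k ∧ B = C * X := by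
  obtain ⟨U, hBU, hU⟩ := (span K (Set.range B.row)).exists_le_finrank_eq (k := k)
    (by rwa [← rank_eq_finrank_span_row]) (by simpa using hkn)
  let b := Module.finBasisOfFinrankEq K U hU
  have hrow (i : Fin m) : B i ∈ U := hBU (subset_span ⟨i, rfl⟩)
  refine ⟨of fun i j => b.repr ⟨B i, hrow i⟩ j, of fun j => b j, ?_, ?_⟩
  · exact (b.linearIndependent.map' U.subtype U.ker_subtype).rank_matrix.trans (Fintype.card_fin k)
  · ext i a
    have := congrArg (fun u : U => (u : Fin n → K) a) (b.sum_repr ⟨B i, hrow i⟩)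
    simp only [Submodule.coe_sum, Submodule.coe_smul, Finset.sum_apply, Pi.smul_apply,
      smul_eq_mul] at this
    simpa [mul_apply] using this.symm

theorem Matrix.exists_isUnit_det_submatrix (X : Matrix (Fin k) (Fin n) K) (hX : X.rank = k) :
    ∃ J : Fin k → Fin n, IsUnit (X.submatrix id J).det := by
  obtain ⟨κ, a, -, hspan, hli⟩ := exists_linearIndependent' K X.col
  have htop : span K (Set.range (X.col ∘ a)) = ⊤ := by
    rw [hspan]
    exact eq_top_of_finrank_eq (by rw [← rank_eq_finrank_span_cols, hX]; simp)
  have : Finite κ := hli.finite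
  let e : Fin k ≃ κ := (Finite.equivFinOfCardEq
    (by simpa using (finrank_eq_nat_card_basis (Basis.mk hli htop.ge)).symm)).symm
  refine ⟨a ∘ e, ?_⟩
  rw [← isUnit_iff_isUnit_det, ← linearIndependent_cols_iff_isUnit]
  exact hli.comp e e.injective

variable [LinearOrder K] [IsStrictOrderedRing K]

theorem Matrix.abs_inv_submatrix_mul_apply_le_one (X : Matrix (Fin k) (Fin n) K)
    {J : Fin k → Fin n} (hJ : ∀ J', |(X.submatrix id J').det| ≤ |(X.submatrix id J).det|)
    (i : Fin k) (j : Fin n) : |((X.submatrix id J)⁻¹ * X) i j| ≤ 1 := by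
  have hcol : (X.submatrix id J).updateCol i (X.col j) =
      X.submatrix id (Function.update J i j) := by
    ext r c
    rcases eq_or_ne c i with rfl | hc <;> simp [*]
  have hcramer : ((X.submatrix id J)⁻¹ * X) i j =
      (X.submatrix id J).det⁻¹ * cramer (X.submatrix id J) (X.col j) i := by
    change ((X.submatrix id J)⁻¹ *ᵥ X.col j) i = _
    rw [inv_def, smul_mulVec, ← cramer_eq_adjugate_mulVec, Ring.inverse_eq_inv']
    rfl
  rw [hcramer, cramer_apply, hcol, abs_mul, abs_inv]
  exact inv_mul_le_one_of_le₀ (hJ _) (abs_nonneg _)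

theorem Matrix.exists_interpolative_of_rank_eq (X : Matrix (Fin k) (Fin n) K) (hX : X.rank = k) :
    ∃ (J : Fin k → Fin n) (R : Matrix (Fin k) (Fin n) K), Function.Injective J ∧
      (∀ i j, |R i j| ≤ 1) ∧ R.submatrix id J = 1 ∧ X.submatrix id J * R = X := by
  obtain ⟨J₀, hJ₀⟩ := X.exists_isUnit_det_submatrix hX
  have : Nonempty (Fin k → Fin n) := ⟨J₀⟩
  obtain ⟨J, hJ⟩ := Finite.exists_max fun J => |(X.submatrix id J).det|
  have hdet : IsUnit (X.submatrix id J).det :=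
    (abs_pos.1 ((abs_pos.2 hJ₀.ne_zero).trans_le (hJ J₀))).isUnit
  refine ⟨J, (X.submatrix id J)⁻¹ * X, fun a b hab => ?_,
    X.abs_inv_submatrix_mul_apply_le_one hJ, ?_, ?_⟩
  · by_contra hne
    exact hdet.ne_zero (det_zero_of_column_eq hne fun r => by simp [hab])
  · rw [submatrix_mul _ _ id id J Function.bijective_id, submatrix_id_id, nonsing_inv_mul _ hdet]
  · rw [mul_nonsing_inv_cancel_left _ _ hdet]

end LinearAlgebra

section Selection

variable {α : Type*} {k n : ℕ} {J : Fin k → Fin n}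

theorem Matrix.submatrix_one_mulVec_apply_self [Semiring α] (hJ : Function.Injective J)
    (u : Fin k → α) (i : Fin k) :
    ((1 : Matrix (Fin n) (Fin n) α).submatrix id J *ᵥ u) (J i) = u i := by
  simp [mulVec, dotProduct, one_apply, hJ.eq_iff]

theorem Matrix.submatrix_one_mulVec_apply_of_notMem [Semiring α] (u : Fin k → α) {a : Fin n}
    (ha : a ∉ Set.range J) : ((1 : Matrix (Fin n) (Fin n) α).submatrix id J *ᵥ u) a = 0 := by
  simp only [mulVec, dotProduct, submatrix_apply, id, one_apply]
  exact Finset.sum_eq_zero fun c _ => by rw [if_neg fun h => ha ⟨c, h.symm⟩, zero_mul]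

theorem Matrix.sub_submatrix_mul_eq_mul_one_sub [CommRing α] {m : ℕ}
    (A B : Matrix (Fin m) (Fin n) α) {R : Matrix (Fin k) (Fin n) α}
    (hB : B.submatrix id J * R = B) :
    A - A.submatrix id J * R =
      (A - B) * (1 - (1 : Matrix (Fin n) (Fin n) α).submatrix id J * R) := by
  have hsel (M : Matrix (Fin m) (Fin n) α) :
      M * (1 : Matrix (Fin n) (Fin n) α).submatrix id J = M.submatrix id J := by
    simpa using mul_submatrix_one (Equiv.refl _) J M
  rw [Matrix.mul_sub, Matrix.mul_one, ← Matrix.mul_assoc, Matrix.sub_mul, Matrix.sub_mul, hsel,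
    hsel, hB, sub_sub_sub_cancel_right]

theorem Matrix.mulVec_apply_eq_add_sum_compl [Semiring α] {R : Matrix (Fin k) (Fin n) α}
    (hJ : Function.Injective J) (hRJ : R.submatrix id J = 1) (w : Fin n → α) (i : Fin k) :
    (R *ᵥ w) i = w (J i) + ∑ j ∈ (univ.map ⟨J, hJ⟩)ᶜ, R i j * w j := by
  have hRJ' (c : Fin k) : R i (J c) = if i = c then 1 else 0 := by
    rw [← one_apply, ← hRJ]; rfl
  simp only [mulVec, dotProduct]
  rw [← sum_add_sum_compl (univ.map ⟨J, hJ⟩), sum_map]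
  simp [hRJ']

theorem Matrix.sum_sq_one_sub_submatrix_one_mul_mulVec_le [Field α] [LinearOrder α]
    [IsStrictOrderedRing α] {R : Matrix (Fin k) (Fin n) α} (hJ : Function.Injective J)
    (hR : ∀ i j, |R i j| ≤ 1) (hRJ : R.submatrix id J = 1) (w : Fin n → α) :
    ∑ a, ((1 - (1 : Matrix (Fin n) (Fin n) α).submatrix id J * R) *ᵥ w) a ^ 2 ≤
      (1 + k * (n - k)) * ∑ a, w a ^ 2 := by
  set S := (1 : Matrix (Fin n) (Fin n) α).submatrix id J
  set s : Finset (Fin n) := univ.map ⟨J, hJ⟩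
  have hkn : k ≤ n := by simpa using Fintype.card_le_of_injective J hJ
  have hcard : (#sᶜ : α) = n - k := by
    rw [card_compl, card_map, card_univ, Fintype.card_fin, Fintype.card_fin, Nat.cast_sub hkn]
  set t : Fin k → α := fun i => ∑ j ∈ sᶜ, R i j * w j
  have hself (i : Fin k) : ((1 - S * R) *ᵥ w) (J i) = -t i := by
    rw [sub_mulVec, one_mulVec, ← mulVec_mulVec, Pi.sub_apply,
      submatrix_one_mulVec_apply_self hJ, mulVec_apply_eq_add_sum_compl hJ hRJ]
    ring
  have hoff (a : Fin n) (ha : a ∈ sᶜ) : ((1 - S * R) *ᵥ w) a = w a := by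
    have ha' : a ∉ Set.range J := by simpa [s] using ha
    rw [sub_mulVec, one_mulVec, ← mulVec_mulVec, Pi.sub_apply,
      submatrix_one_mulVec_apply_of_notMem _ ha', sub_zero]
  set W := ∑ a ∈ sᶜ, w a ^ 2
  have ht (i : Fin k) : t i ^ 2 ≤ (n - k) * W := by
    calc t i ^ 2 ≤ (∑ j ∈ sᶜ, R i j ^ 2) * W := sum_mul_sq_le_sq_mul_sq _ _ _
      _ ≤ (∑ _j ∈ sᶜ, (1 : α)) * W := by
        gcongr with j
        exact (sq_le_one_iff_abs_le_one _).2 (hR i j)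
      _ = (n - k) * W := by rw [sum_const, nsmul_one, hcard]
  have hW : W ≤ ∑ a, w a ^ 2 := sum_le_univ_sum_of_nonneg fun a => sq_nonneg _
  calc ∑ a, ((1 - S * R) *ᵥ w) a ^ 2
      = ∑ i, t i ^ 2 + W := by
        rw [← sum_add_sum_compl s, sum_map]
        simp only [Function.Embedding.coeFn_mk, hself, neg_sq]
        congr 1
        exact sum_congr rfl fun a ha => by rw [hoff a ha]
    _ ≤ ∑ _i : Fin k, (n - k) * W + W := by grw [sum_le_sum fun i _ => ht i]
    _ = (1 + k * (n - k)) * W := by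
        rw [sum_const, card_univ, Fintype.card_fin, nsmul_eq_mul]; ring
    _ ≤ (1 + k * (n - k)) * ∑ a, w a ^ 2 :=
        mul_le_mul_of_nonneg_left hW (by rw [← hcard]; positivity)

end Selection

section SpecNorm

open scoped Matrix.Norms.L2Operator

variable {m n : ℕ}

theorem specNorm_nonneg (A : Matrix (Fin m) (Fin n) ℝ) : 0 ≤ specNorm A := norm_nonneg A

theorem specNorm_mul_le {p : ℕ} (A : Matrix (Fin m) (Fin p) ℝ) (B : Matrix (Fin p) (Fin n) ℝ) :
    specNorm (A * B) ≤ specNorm A * specNorm B :=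
  l2_opNorm_mul A B

theorem continuous_specNorm : Continuous (specNorm : Matrix (Fin m) (Fin n) ℝ → ℝ) :=
  continuous_norm

theorem specNorm_le_of_forall_sum_sq_le (M : Matrix (Fin m) (Fin n) ℝ) {c : ℝ} (hc : 0 ≤ c)
    (h : ∀ w, ∑ a, (M *ᵥ w) a ^ 2 ≤ c ^ 2 * ∑ j, w j ^ 2) : specNorm M ≤ c := by
  refine ContinuousLinearMap.opNorm_le_bound _ hc fun v => ?_
  rw [← pow_le_pow_iff_left₀ (norm_nonneg _) (by positivity) two_ne_zero, mul_pow,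
    EuclideanSpace.norm_sq_eq, EuclideanSpace.norm_sq_eq]
  simpa only [Real.norm_eq_abs, sq_abs, LinearMap.coe_toContinuousLinearMap', toLpLin_apply,
    WithLp.ofLp_toLp] using h v

end SpecNorm

theorem specNorm_one_sub_submatrix_one_mul_le {k n : ℕ} {J : Fin k → Fin n}
    {R : Matrix (Fin k) (Fin n) ℝ} (hJ : Function.Injective J) (hR : ∀ i j, |R i j| ≤ 1)
    (hRJ : R.submatrix id J = 1) :
    specNorm (1 - (1 : Matrix (Fin n) (Fin n) ℝ).submatrix id J * R) ≤ √(1 + k * (n - k)) := by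
  have hkn : (k : ℝ) ≤ n := by exact_mod_cast (by simpa using Fintype.card_le_of_injective J hJ)
  refine specNorm_le_of_forall_sum_sq_le _ (Real.sqrt_nonneg _) fun w => ?_
  rw [Real.sq_sqrt (by nlinarith)]
  exact sum_sq_one_sub_submatrix_one_mul_mulVec_le hJ hR hRJ w

theorem exists_interpolative_specNorm_le_of_rank_le {m n k : ℕ} (A B : Matrix (Fin m) (Fin n) ℝ)
    (hB : B.rank ≤ k) (hkn : k ≤ n) :
    ∃ (J : Fin k → Fin n) (R : Matrix (Fin k) (Fin n) ℝ), Function.Injective J ∧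
      (∀ i j, |R i j| ≤ 1) ∧
      specNorm (A - A.submatrix id J * R) ≤ specNorm (A - B) * √(1 + k * (n - k)) := by
  obtain ⟨C, X, hX, rfl⟩ := B.exists_eq_mul_of_rank_le hB hkn
  obtain ⟨J, R, hJ, hR, hRJ, hXJR⟩ := X.exists_interpolative_of_rank_eq hX
  have hCXJR : (C * X).submatrix id J * R = C * X := by
    rw [submatrix_mul _ _ id id J Function.bijective_id, submatrix_id_id, Matrix.mul_assoc, hXJR]
  refine ⟨J, R, hJ, hR, ?_⟩
  rw [sub_submatrix_mul_eq_mul_one_sub A _ hCXJR]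
  exact (specNorm_mul_le _ _).trans <| mul_le_mul_of_nonneg_left
    (specNorm_one_sub_submatrix_one_mul_le hJ hR hRJ) (specNorm_nonneg _)

theorem exists_interpolative_forall_specNorm_le {m n k : ℕ} (A : Matrix (Fin m) (Fin n) ℝ)
    (hkn : k ≤ n) :
    ∃ (J : Fin k → Fin n) (R : Matrix (Fin k) (Fin n) ℝ), Function.Injective J ∧
      (∀ i j, |R i j| ≤ 1) ∧ ∀ B : Matrix (Fin m) (Fin n) ℝ, B.rank ≤ k →
        specNorm (A - A.submatrix id J * R) ≤ specNorm (A - B) * √(1 + k * (n - k)) := by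
  let K : Set ((Fin k → Fin n) × Matrix (Fin k) (Fin n) ℝ) :=
    {J | Function.Injective J} ×ˢ {R | ∀ i j, |R i j| ≤ 1}
  have hK : IsCompact K := by
    refine (Set.toFinite _).isCompact.prod ?_
    have hbox : {R : Matrix (Fin k) (Fin n) ℝ | ∀ i j, |R i j| ≤ 1} =
        Set.univ.pi fun _ => Set.univ.pi fun _ => Set.Icc (-1) 1 := by
      ext R
      simp only [Set.mem_ofPred_eq, abs_le]
      exact ⟨fun h i _ j _ => h i j, fun h i j => h i trivial j trivial⟩
    rw [hbox]
    exact isCompact_univ_pi fun _ => isCompact_univ_pi fun _ => isCompact_Icc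
  obtain ⟨J₀, R₀, hJ₀, hR₀, -⟩ := exists_interpolative_specNorm_le_of_rank_le A 0 (by simp) hkn
  have hcont : Continuous fun p : (Fin k → Fin n) × Matrix (Fin k) (Fin n) ℝ =>
      specNorm (A - A.submatrix id p.1 * p.2) :=
    continuous_specNorm.comp <| continuous_const.sub <|
      ((continuous_of_discreteTopology (f := fun J : Fin k → Fin n => A.submatrix id J)).comp
        continuous_fst).matrix_mul continuous_snd
  obtain ⟨⟨J, R⟩, ⟨hJ, hR⟩, hmin⟩ := hK.exists_isMinOn ⟨(J₀, R₀), hJ₀, hR₀⟩ hcont.continuousOn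
  refine ⟨J, R, hJ, hR, fun B hB => ?_⟩
  obtain ⟨J', R', hJ', hR', hle⟩ := exists_interpolative_specNorm_le_of_rank_le A B hB hkn
  exact (hmin (Set.mk_mem_prod hJ' hR')).trans hle

theorem interpolative_decomposition_general {m n : ℕ} (A : Matrix (Fin m) (Fin n) ℝ)
    (k : ℕ) (hk : k < min m n) :
    ∃ (J : Fin k → Fin n) (R : Matrix (Fin k) (Fin n) ℝ) (e : Equiv.Perm (Fin n)),
      Function.Injective J ∧ (∀ i j, |R i j| ≤ 1) ∧
      specNorm (A - A.submatrix id J * R * e.permMatrix ℝ) ≤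
        sInf {t : ℝ | ∃ B : Matrix (Fin m) (Fin n) ℝ, B.rank ≤ k ∧ t = specNorm (A - B)} *
          Real.sqrt (1 + (k : ℝ) * ((n : ℝ) - (k : ℝ))) := by
  have hkn : k ≤ n := (hk.trans_le (min_le_right m n)).le
  obtain ⟨J, R, hJ, hR, hle⟩ := exists_interpolative_forall_specNorm_le A hkn
  have hc : 0 < √(1 + k * (n - k) : ℝ) := by
    have : (k : ℝ) ≤ n := by exact_mod_cast hkn
    positivity
  refine ⟨J, R, 1, hJ, hR, ?_⟩
  rw [permMatrix_one, Matrix.mul_one, ← div_le_iff₀ hc]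
  refine le_csInf ⟨_, 0, by simp, rfl⟩ ?_
  rintro _ ⟨B, hB, rfl⟩
  exact (div_le_iff₀ hc).2 (hle B hB)

/-- **Interpolative Decomposition** (Theorem 1 of the paper).
For a real `m × n` matrix `A` and `1 ≤ k < min m n`, there are `k` column indices
`J` (injectively chosen), an interpolation matrix `R` with entries of absolute value
at most `1`, and a permutation matrix `P` such that
`‖A - A_{:,J} R P‖₂ ≤ σ_{k+1}(A) √(1 + k (n - k))`, where `σ_{k+1}(A)` is the
spectral-norm distance from `A` to matrices of rank at most `k`. -/
theorem interpolative_decomposition {m n : ℕ} (A : Matrix (Fin m) (Fin n) ℝ)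
    (k : ℕ) (hk1 : 1 ≤ k) (hk : k < min m n) :
    ∃ (J : Fin k → Fin n) (R : Matrix (Fin k) (Fin n) ℝ) (e : Equiv.Perm (Fin n)),
      Function.Injective J ∧ (∀ i j, |R i j| ≤ 1) ∧
      specNorm (A - A.submatrix id J * R * e.permMatrix ℝ) ≤
        sInf {t : ℝ | ∃ B : Matrix (Fin m) (Fin n) ℝ, B.rank ≤ k ∧ t = specNorm (A - B)} *
          Real.sqrt (1 + (k : ℝ) * ((n : ℝ) - (k : ℝ))) :=
  interpolative_decomposition_general A k hk
end

section
/- Let D be an invertible real n×n matrix, L a real n×k matrix, S a real k×k matrix, and R a real k×n matrix, and suppose that R D⁻¹ L is invertible; set D̂ := (R D⁻¹ L)⁻¹. Let b ∈ ℝⁿ, and suppose σ̂ ∈ ℝᵏ satisfies the reduced system (D̂ + S) σ̂ = D̂ R D⁻¹ b. Define σ := D⁻¹ (b − L S σ̂). Then R σ = σ̂ and (D + L S R) σ = b; i.e., the Schur-complement procedure of the single-level compressed direct solver produces an exact solution of the block-separable system. -/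
/-!
Multiplying the reduced system by `M := R D⁻¹ L` turns it into `σ̂ = R D⁻¹ b - M S σ̂`, and the
right-hand side is exactly `R σ`. Once `R σ = σ̂`, the low-rank term `L S R σ` equals `L S σ̂`,
which is what `D σ = b - L S σ̂` lacks to reach `b`.
-/

namespace Matrix

variable {m n : Type*} [Fintype m] [Fintype n] {α : Type*} [CommRing α]

theorem eq_sub_mul_mulVec_of_inv_add_mulVec_eq [DecidableEq n] {M S : Matrix n n α}
    (hM : IsUnit M) {x y : n → α} (h : (M⁻¹ + S) *ᵥ x = M⁻¹ *ᵥ y) : x = y - (M * S) *ᵥ x := by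
  have hMM : M * M⁻¹ = 1 := mul_nonsing_inv M ((isUnit_iff_isUnit_det M).mp hM)
  refine eq_sub_of_add_eq ?_
  calc x + (M * S) *ᵥ x = (M * (M⁻¹ + S)) *ᵥ x := by rw [mul_add, hMM, add_mulVec, one_mulVec]
    _ = M *ᵥ M⁻¹ *ᵥ y := by rw [← mulVec_mulVec, h]
    _ = y := by rw [mulVec_mulVec, hMM, one_mulVec]

theorem add_mul_mul_mulVec_eq {D : Matrix m m α} {L : Matrix m n α} {S : Matrix n n α}
    {R : Matrix n m α} {v b : m → α} {x : n → α}
    (hD : D *ᵥ v = b - (L * S) *ᵥ x) (hR : R *ᵥ v = x) : (D + L * S * R) *ᵥ v = b := by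
  rw [add_mulVec, hD, ← mulVec_mulVec v (L * S), hR, sub_add_cancel]

end Matrix

open Matrix in
/-- **Correctness of the single-level compressed inverse (Algorithm 1).**
If `σ̂` solves the reduced system `(D̂ + S) σ̂ = D̂ R D⁻¹ b` with
`D̂ = (R D⁻¹ L)⁻¹`, then `σ := D⁻¹ (b - L S σ̂)` satisfies `R σ = σ̂` and
`(D + L S R) σ = b`. -/
theorem compressed_inverse_correct {n k : ℕ}
    (D : Matrix (Fin n) (Fin n) ℝ) (L : Matrix (Fin n) (Fin k) ℝ)
    (S : Matrix (Fin k) (Fin k) ℝ) (R : Matrix (Fin k) (Fin n) ℝ)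
    (hD : IsUnit D) (hRDL : IsUnit (R * D⁻¹ * L))
    (b : Fin n → ℝ) (σhat : Fin k → ℝ)
    (hreduced : ((R * D⁻¹ * L)⁻¹ + S).mulVec σhat =
      ((R * D⁻¹ * L)⁻¹ * R * D⁻¹).mulVec b) :
    R.mulVec (D⁻¹.mulVec (b - (L * S).mulVec σhat)) = σhat ∧
    (D + L * S * R).mulVec (D⁻¹.mulVec (b - (L * S).mulVec σhat)) = b := by
  have hσhat : σhat = (R * D⁻¹) *ᵥ b - (R * D⁻¹ * L * S) *ᵥ σhat :=
    eq_sub_mul_mulVec_of_inv_add_mulVec_eq hRDL (by rwa [mulVec_mulVec, ← Matrix.mul_assoc])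
  have hR : R *ᵥ (D⁻¹ *ᵥ (b - (L * S) *ᵥ σhat)) = σhat := by
    rw [mulVec_mulVec, mulVec_sub, mulVec_mulVec, ← Matrix.mul_assoc, ← hσhat]
  have hDσ : D *ᵥ (D⁻¹ *ᵥ (b - (L * S) *ᵥ σhat)) = b - (L * S) *ᵥ σhat := by
    rw [mulVec_mulVec, mul_nonsing_inv D ((isUnit_iff_isUnit_det D).mp hD), one_mulVec]
  exact ⟨hR, add_mul_mul_mulVec_eq hDσ hR⟩
end

section
/- Let B be a real m×n matrix, L a real m×r matrix, R a real s×n matrix, and let P be a real r×m matrix with ‖P‖₂ ≤ 1 and Q a real n×s matrix with ‖Q‖₂ ≤ 1 (for instance, row- and column-selection matrices). Then ‖B − L (P B Q) R‖₂ ≤ (1/2)(1 + ‖R‖₂) · ‖B − L P B‖₂ + (1/2)(1 + ‖L‖₂) · ‖B − B Q R‖₂. In particular, the error of a two-sided skeletonization B ≈ L B_{skel} R, where B_{skel} = P B Q is a row-and-column submatrix of B, is controlled by the separate target-skeletonization error ‖B − L P B‖₂ and source-skeletonization error ‖B − B Q R‖₂. -/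
open scoped Matrix.Norms.L2Operator

namespace Matrix

section Identities

variable {α : Type*} [Ring α] {m n r s : Type*} [Fintype m] [Fintype n] [Fintype r] [Fintype s]
  (B : Matrix m n α) (L : Matrix m r α) (R : Matrix s n α) (P : Matrix r m α) (Q : Matrix n s α)

theorem sub_mul_mul_mul_eq_add_mul_sub :
    B - L * (P * B * Q) * R = (B - L * (P * B)) + L * P * (B - B * Q * R) := by
  simp only [Matrix.mul_sub, Matrix.mul_assoc]
  abel

theorem sub_mul_mul_mul_eq_add_sub_mul :
    B - L * (P * B * Q) * R = (B - B * Q * R) + (B - L * (P * B)) * (Q * R) := by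
  simp only [Matrix.sub_mul, Matrix.mul_assoc]
  abel

end Identities

section L2OpNorm

variable {𝕜 : Type*} [RCLike 𝕜] {m n r s : Type*} [Fintype m] [Fintype n] [Fintype r]
  [Fintype s] [DecidableEq n] {B : Matrix m n 𝕜} {L : Matrix m r 𝕜} {R : Matrix s n 𝕜}
  {P : Matrix r m 𝕜} {Q : Matrix n s 𝕜}

theorem l2_opNorm_sub_mul_mul_mul_le_left [DecidableEq m] [DecidableEq r] (hP : ‖P‖ ≤ 1) :
    ‖B - L * (P * B * Q) * R‖ ≤ ‖B - L * (P * B)‖ + ‖L‖ * ‖B - B * Q * R‖ := by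
  rw [sub_mul_mul_mul_eq_add_mul_sub]
  calc _ ≤ ‖B - L * (P * B)‖ + ‖L * P * (B - B * Q * R)‖ := norm_add_le _ _
    _ ≤ ‖B - L * (P * B)‖ + ‖L‖ * ‖P‖ * ‖B - B * Q * R‖ := by
      gcongr
      exact (l2_opNorm_mul _ _).trans (by gcongr; exact l2_opNorm_mul _ _)
    _ ≤ ‖B - L * (P * B)‖ + ‖L‖ * ‖B - B * Q * R‖ := by
      gcongr
      exact mul_le_of_le_one_right (norm_nonneg L) hP

theorem l2_opNorm_sub_mul_mul_mul_le_right [DecidableEq s] (hQ : ‖Q‖ ≤ 1) :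
    ‖B - L * (P * B * Q) * R‖ ≤ ‖B - B * Q * R‖ + ‖R‖ * ‖B - L * (P * B)‖ := by
  rw [sub_mul_mul_mul_eq_add_sub_mul]
  calc _ ≤ ‖B - B * Q * R‖ + ‖(B - L * (P * B)) * (Q * R)‖ := norm_add_le _ _
    _ ≤ ‖B - B * Q * R‖ + ‖B - L * (P * B)‖ * (‖Q‖ * ‖R‖) := by
      gcongr
      exact (l2_opNorm_mul _ _).trans (by gcongr; exact l2_opNorm_mul _ _)
    _ ≤ ‖B - B * Q * R‖ + ‖R‖ * ‖B - L * (P * B)‖ := by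
      rw [mul_comm ‖R‖]
      gcongr
      exact mul_le_of_le_one_left (norm_nonneg R) hQ

end L2OpNorm

end Matrix

theorem specNorm_eq_l2_opNorm {m n : ℕ} (A : Matrix (Fin m) (Fin n) ℝ) : specNorm A = ‖A‖ := rfl

/-- Splitting of the two-sided skeletonization error into separate target- and
source-skeletonization errors (Section 4.1 of the paper). -/
theorem skeletonization_error_split {m n r s : ℕ}
    (B : Matrix (Fin m) (Fin n) ℝ) (L : Matrix (Fin m) (Fin r) ℝ)
    (R : Matrix (Fin s) (Fin n) ℝ) (P : Matrix (Fin r) (Fin m) ℝ)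
    (Q : Matrix (Fin n) (Fin s) ℝ) (hP : specNorm P ≤ 1) (hQ : specNorm Q ≤ 1) :
    specNorm (B - L * (P * B * Q) * R) ≤
      1 / 2 * (1 + specNorm R) * specNorm (B - L * (P * B)) +
      1 / 2 * (1 + specNorm L) * specNorm (B - B * Q * R) := by
  simp only [specNorm_eq_l2_opNorm] at hP hQ ⊢
  have hleft := Matrix.l2_opNorm_sub_mul_mul_mul_le_left (B := B) (L := L) (R := R) (Q := Q) hP
  have hright := Matrix.l2_opNorm_sub_mul_mul_mul_le_right (B := B) (L := L) (R := R) (P := P) hQ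
  linarith
end

section
/- Let B, T, C, E be real matrices with B = T C + E, where B is m×n, T is m×q, C is q×n and E is m×n. Let W be a real n×n matrix, Q a real n×s matrix with ‖Q‖₂ ≤ 1 (e.g., a column-selection matrix), and M a real s×n matrix. Then ‖B W − (B Q) M‖₂ ≤ ‖T‖₂ · ‖C W − (C Q) M‖₂ + ‖E‖₂ · (‖W‖₂ + ‖M‖₂). In particular, if the far-field kernel matrix B factors through proxy interactions C up to an error E, then the source-skeletonization error of B is controlled by the source-skeletonization error of the proxy matrix C plus a term proportional to ‖E‖₂. -/
/-!
The residual `B W - B Q M` equals `B (W - Q M)`, which is linear in `B`. Substituting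
`B = T C + E` splits it as `T (C W - C Q M) + E (W - Q M)`, and submultiplicativity of the
spectral norm together with `‖Q M‖₂ ≤ ‖Q‖₂ ‖M‖₂ ≤ ‖M‖₂` bounds the two terms.
-/

open scoped Matrix.Norms.L2Operator

namespace Matrix

theorem mul_sub_mul_mul_eq_of_eq_mul_add {R l m n p s : Type*} [Ring R]
    [Fintype m] [Fintype n] [Fintype s]
    {B E : Matrix l n R} {T : Matrix l m R} {C : Matrix m n R} (hBE : B = T * C + E)
    (W : Matrix n p R) (Q : Matrix n s R) (M : Matrix s p R) :
    B * W - B * Q * M = T * (C * W - C * Q * M) + E * (W - Q * M) := by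
  subst hBE
  simp only [Matrix.add_mul, Matrix.mul_sub, Matrix.mul_assoc]
  abel

theorem l2_opNorm_sub_mul_le {𝕜 n p s : Type*} [RCLike 𝕜] [Fintype n] [Fintype p]
    [DecidableEq p] [Fintype s] [DecidableEq s] {W : Matrix n p 𝕜} {Q : Matrix n s 𝕜}
    (hQ : ‖Q‖ ≤ 1) (M : Matrix s p 𝕜) : ‖W - Q * M‖ ≤ ‖W‖ + ‖M‖ :=
  calc ‖W - Q * M‖ ≤ ‖W‖ + ‖Q * M‖ := norm_sub_le _ _
    _ ≤ ‖W‖ + ‖Q‖ * ‖M‖ := by gcongr; exact l2_opNorm_mul Q M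
    _ ≤ ‖W‖ + ‖M‖ := by gcongr; exact mul_le_of_le_one_left (norm_nonneg M) hQ

end Matrix

/-- Introducing the proxy operator `T` into the far-field skeletonization error
(Section 4.1 of the paper): if `B = T C + E`, then the source-skeletonization error
of `B` is controlled by that of the proxy matrix `C` plus a term proportional to
`‖E‖₂`. -/
theorem proxy_factorization_error {m n q s : ℕ}
    (B E : Matrix (Fin m) (Fin n) ℝ) (T : Matrix (Fin m) (Fin q) ℝ)
    (C : Matrix (Fin q) (Fin n) ℝ) (hBE : B = T * C + E)
    (W : Matrix (Fin n) (Fin n) ℝ) (Q : Matrix (Fin n) (Fin s) ℝ)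
    (hQ : specNorm Q ≤ 1) (M : Matrix (Fin s) (Fin n) ℝ) :
    specNorm (B * W - B * Q * M) ≤
      specNorm T * specNorm (C * W - C * Q * M) +
        specNorm E * (specNorm W + specNorm M) := by
  simp only [specNorm_eq_l2_opNorm] at hQ ⊢
  calc ‖B * W - B * Q * M‖ = ‖T * (C * W - C * Q * M) + E * (W - Q * M)‖ := by
        rw [Matrix.mul_sub_mul_mul_eq_of_eq_mul_add hBE]
    _ ≤ ‖T * (C * W - C * Q * M)‖ + ‖E * (W - Q * M)‖ := norm_add_le _ _
    _ ≤ ‖T‖ * ‖C * W - C * Q * M‖ + ‖E‖ * ‖W - Q * M‖ := by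
        gcongr <;> exact Matrix.l2_opNorm_mul _ _
    _ ≤ ‖T‖ * ‖C * W - C * Q * M‖ + ‖E‖ * (‖W‖ + ‖M‖) := by
        gcongr; exact Matrix.l2_opNorm_sub_mul_le hQ M
end

section
/- Let R > 0, α > 1, and q ≥ 1. Let x₁, …, x_m ∈ ℝ³ with ‖x_i‖ ≥ α R for all i, and p₀, …, p_{q−1} ∈ ℝ³ with ‖p_k‖ = R for all k. Let T be the real m×q matrix with entries T_{ik} := w · P(x_i, p_k), where w := 4π R² / q. Then ‖T‖₂ ≤ √(m q) · (α + 1) / (q (α − 1)²). In particular, ‖T‖₂ ≤ C · (4π R² / q) with the explicit constant C = √(m q) (α + 1) / (4π R² (α − 1)²). -/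
/-- Exterior Poisson kernel of the ball of radius `R` centered at the origin in `ℝ³`. -/
noncomputable def exteriorPoissonKernel (R : ℝ) (x p : EuclideanSpace ℝ (Fin 3)) : ℝ :=
  (‖x‖ ^ 2 - R ^ 2) / (4 * Real.pi * R * ‖x - p‖ ^ 3)

open Matrix
open scoped Matrix.Norms.Frobenius

theorem Matrix.frobenius_norm_le_sqrt_card_mul {m n α : Type*} [Fintype m] [Fintype n]
    [SeminormedAddCommGroup α] (A : Matrix m n α) {B : ℝ} (hB : 0 ≤ B)
    (hA : ∀ i j, ‖A i j‖ ≤ B) :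
    ‖A‖ ≤ √(Fintype.card m * Fintype.card n) * B := by
  have hsum : ∑ i, ∑ j, ‖A i j‖ ^ 2 ≤ Fintype.card m * Fintype.card n * B ^ 2 := by
    calc ∑ i, ∑ j, ‖A i j‖ ^ 2 ≤ ∑ _i : m, ∑ _j : n, B ^ 2 := by
          gcongr with i _ j _
          exact hA i j
      _ = _ := by simp [mul_assoc]
  rw [frobenius_norm_def, ← Real.sqrt_eq_rpow, ← Real.sqrt_sq hB,
    ← Real.sqrt_mul (by positivity)]
  simp only [Real.rpow_two]
  exact Real.sqrt_le_sqrt hsum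

theorem specNorm_le_frobenius_norm {m n : ℕ} (A : Matrix (Fin m) (Fin n) ℝ) :
    specNorm A ≤ ‖A‖ :=
  ContinuousLinearMap.opNorm_le_bound _ (norm_nonneg _) fun v => by
    calc ‖toEuclideanLin A v‖ = ‖replicateCol Unit (A *ᵥ v.ofLp)‖ :=
          (frobenius_norm_replicateCol _).symm
      _ = ‖A * replicateCol Unit v.ofLp‖ := by rw [replicateCol_mulVec]
      _ ≤ ‖A‖ * ‖replicateCol Unit v.ofLp‖ := frobenius_norm_mul _ _
      _ = ‖A‖ * ‖v‖ := by rw [frobenius_norm_replicateCol]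

section PoissonKernel

variable {R α : ℝ} {x p : EuclideanSpace ℝ (Fin 3)}

theorem exteriorPoissonKernel_nonneg (hR : 0 ≤ R) (hx : R ≤ ‖x‖) :
    0 ≤ exteriorPoissonKernel R x p := by
  have hR2 : R ^ 2 ≤ ‖x‖ ^ 2 := pow_le_pow_left₀ hR hx 2
  have hπ := Real.pi_pos
  exact div_nonneg (by linarith) (by positivity)

theorem exteriorPoissonKernel_le (hR : 0 < R) (hα : 1 < α) (hx : α * R ≤ ‖x‖)
    (hp : ‖p‖ ≤ R) :
    exteriorPoissonKernel R x p ≤ (α + 1) / (4 * Real.pi * R ^ 2 * (α - 1) ^ 2) := by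
  set t := ‖x‖
  have hπ := Real.pi_pos
  have hα1 : 0 < α - 1 := by linarith
  have hgap : (α - 1) * R ≤ t - R := by linarith
  have hgap_pos : 0 < t - R := lt_of_lt_of_le (by positivity) hgap
  have hdist : t - R ≤ ‖x - p‖ := by linarith [norm_sub_norm_le x p]
  calc exteriorPoissonKernel R x p
      ≤ (t ^ 2 - R ^ 2) / (4 * Real.pi * R * (t - R) ^ 3) := by
        unfold exteriorPoissonKernel
        gcongr
        nlinarith
    _ = (t + R) / (4 * Real.pi * R * (t - R) ^ 2) := by
        field_simp
        ring
    _ ≤ (α + 1) / (4 * Real.pi * R ^ 2 * (α - 1) ^ 2) := by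
        rw [div_le_div_iff₀ (by positivity) (by positivity)]
        have hslope : (t + R) * (α - 1) ≤ (α + 1) * (t - R) := by nlinarith
        have key := mul_le_mul hgap hslope (by positivity) hgap_pos.le
        have h4πR : 0 ≤ 4 * Real.pi * R := by positivity
        nlinarith [mul_le_mul_of_nonneg_left key h4πR]

theorem abs_exteriorPoissonKernel_le (hR : 0 < R) (hα : 1 < α) (hx : α * R ≤ ‖x‖)
    (hp : ‖p‖ ≤ R) :
    |exteriorPoissonKernel R x p| ≤ (α + 1) / (4 * Real.pi * R ^ 2 * (α - 1) ^ 2) := by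
  have hxR : R ≤ ‖x‖ := le_trans (by nlinarith) hx
  rw [abs_of_nonneg (exteriorPoissonKernel_nonneg hR.le hxR)]
  exact exteriorPoissonKernel_le hR hα hx hp

end PoissonKernel

theorem proxy_operator_norm_bound_general {m q : ℕ} (R α : ℝ) (hR : 0 < R) (hα : 1 < α)
    (x : Fin m → EuclideanSpace ℝ (Fin 3)) (hx : ∀ i, α * R ≤ ‖x i‖)
    (p : Fin q → EuclideanSpace ℝ (Fin 3)) (hp : ∀ k, ‖p k‖ = R)
    (T : Matrix (Fin m) (Fin q) ℝ)
    (hT : ∀ i k, T i k = 4 * Real.pi * R ^ 2 / q * exteriorPoissonKernel R (x i) (p k)) :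
    specNorm T ≤ Real.sqrt (m * q) * (α + 1) / (q * (α - 1) ^ 2) ∧
    specNorm T ≤ Real.sqrt (m * q) * (α + 1) / (4 * Real.pi * R ^ 2 * (α - 1) ^ 2) *
      (4 * Real.pi * R ^ 2 / q) := by
  have hπ := Real.pi_pos
  have hentry : ∀ i k, ‖T i k‖ ≤ (α + 1) / (q * (α - 1) ^ 2) := fun i k => calc
    ‖T i k‖ = 4 * Real.pi * R ^ 2 / q * |exteriorPoissonKernel R (x i) (p k)| := by
        rw [hT, norm_mul, Real.norm_eq_abs, Real.norm_eq_abs, abs_of_nonneg (by positivity)]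
    _ ≤ 4 * Real.pi * R ^ 2 / q * ((α + 1) / (4 * Real.pi * R ^ 2 * (α - 1) ^ 2)) := by
        gcongr
        exact abs_exteriorPoissonKernel_le hR hα (hx i) (hp k).le
    _ = (α + 1) / (q * (α - 1) ^ 2) := by field_simp
  have hbound := (specNorm_le_frobenius_norm T).trans
    (frobenius_norm_le_sqrt_card_mul T (by positivity) hentry)
  simp only [Fintype.card_fin] at hbound
  constructor
  · calc specNorm T ≤ _ := hbound
      _ = _ := by ring
  · calc specNorm T ≤ _ := hbound
      _ = _ := by field_simp

/-- **Proposition 1 of the paper**, with an explicit constant: the spectral norm of the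
discrete Poisson-kernel operator `T` with entries `T i k = w P(xᵢ, pₖ)`,
`w = 4 π R² / q`, is bounded by `√(m q) (α + 1) / (q (α - 1)²)`, i.e. by
`C ⬝ (4 π R² / q)` with `C = √(m q) (α + 1) / (4 π R² (α - 1)²)`. -/
theorem proxy_operator_norm_bound {m q : ℕ} (R α : ℝ) (hR : 0 < R) (hα : 1 < α)
    (hq : 1 ≤ q) (x : Fin m → EuclideanSpace ℝ (Fin 3)) (hx : ∀ i, α * R ≤ ‖x i‖)
    (p : Fin q → EuclideanSpace ℝ (Fin 3)) (hp : ∀ k, ‖p k‖ = R)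
    (T : Matrix (Fin m) (Fin q) ℝ)
    (hT : ∀ i k, T i k = 4 * Real.pi * R ^ 2 / q * exteriorPoissonKernel R (x i) (p k)) :
    specNorm T ≤ Real.sqrt (m * q) * (α + 1) / (q * (α - 1) ^ 2) ∧
    specNorm T ≤ Real.sqrt (m * q) * (α + 1) / (4 * Real.pi * R ^ 2 * (α - 1) ^ 2) *
      (4 * Real.pi * R ^ 2 / q) :=
  proxy_operator_norm_bound_general R α hR hα x hx p hp T hT
end

section
/- Let x, y ∈ ℝ³ with 0 < ‖y‖ < ‖x‖, and let p be a natural number. Then the truncated multipole expansion of the Laplace kernel satisfies | 1/‖x − y‖ − Σ_{ℓ=0}^{p} (‖y‖^ℓ / ‖x‖^{ℓ+1}) · P_ℓ( ⟨x, y⟩ / (‖x‖ ‖y‖) ) | ≤ (1 / (‖x‖ − ‖y‖)) · (‖y‖ / ‖x‖)^{p+1}. -/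
/-!
Let `a n = (2n choose n) / 4 ^ n` be the Taylor coefficients of `(1 - z) ^ (-1/2)`. The identity
`∑_{k + l = n} a k * a l = 1` makes `g z = ∑ a n * z ^ n` satisfy `g z ^ 2 = (1 - z)⁻¹`
for `‖z‖ < 1`. For `‖w‖ = 1` and real `|t| < 1` one has `‖1 - t w‖ ^ 2 = 1 - 2 t Re w + t ^ 2`,
so the Cauchy product `g (t w) * g (t w̄) = ‖1 - t w‖⁻¹` expands `(1 - 2 t u + t ^ 2) ^ (-1/2)`,
`u = Re w`, in powers of `t` with coefficients `∑_{k + l = ℓ} a k a l w ^ k w̄ ^ l` of modulus at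
most `1`. The Rodrigues formula gives
`P_ℓ u = ∑_{n + j = ℓ} a n (n choose j) (2u) ^ (n - j) (-1) ^ j`, so expanding `g (2 t u - t ^ 2)`
as a double series for small `t` shows that the `P_ℓ u` are the coefficients of the same
expansion. With `t = ‖y‖ / ‖x‖` the kernel `1 / ‖x - y‖` equals
`‖x‖⁻¹ ∑ P_ℓ(u) t ^ ℓ`, whose tail beyond degree `p` is at most `t ^ (p + 1) / (1 - t)`.
-/

/-- Legendre polynomial of degree `ℓ` via the Rodrigues formula, normalized so that
`legendre ℓ` evaluates to `1` at `1`. -/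
noncomputable def legendre (ℓ : ℕ) : Polynomial ℝ :=
  ((2 ^ ℓ * Nat.factorial ℓ : ℝ)⁻¹) •
    Polynomial.derivative^[ℓ] ((Polynomial.X ^ 2 - 1) ^ ℓ)

open Finset

lemma sum_antidiagonal_two_mul_fst_mul {M : Type*} [CommSemiring M] (m : ℕ) (f : ℕ → M) :
    ∑ p ∈ antidiagonal m, 2 * (p.1 : M) * (f p.1 * f p.2) =
      m * ∑ p ∈ antidiagonal m, f p.1 * f p.2 := by
  have swap := Nat.sum_antidiagonal_swap (n := m) (f := fun p => (p.1 : M) * (f p.1 * f p.2))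
  simp only [Prod.fst_swap, Prod.snd_swap] at swap
  calc _ = ∑ p ∈ antidiagonal m, (p.1 : M) * (f p.1 * f p.2)
        + ∑ p ∈ antidiagonal m, (p.2 : M) * (f p.2 * f p.1) := by
        rw [swap, ← sum_add_distrib]; simp only [← two_mul, mul_assoc]
    _ = _ := by
        rw [mul_sum, ← sum_add_distrib]
        refine sum_congr rfl fun p hp => ?_
        rw [← mem_antidiagonal.mp hp, Nat.cast_add]; ring

lemma hasSum_choose_mul_pow_mul_pow (x y : ℝ) (n : ℕ) :
    HasSum (fun j => (n.choose j : ℝ) * x ^ (n - j) * y ^ j) ((x + y) ^ n) := by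
  rw [add_comm, add_pow]
  convert hasSum_sum_of_ne_finset_zero (L := .unconditional ℕ) (s := range (n + 1))
    fun j hj => ?_ using 2 with j
  · ring
  · rw [Nat.choose_eq_zero_of_lt (by simpa using hj)]; simp

lemma hasSum_mul_choose_mul_pow_mul_pow {a : ℕ → ℝ} {x y : ℝ}
    (ha : Summable fun n => |a n| * (|x| + |y|) ^ n) :
    HasSum (fun p : ℕ × ℕ => a p.1 * p.1.choose p.2 * x ^ (p.1 - p.2) * y ^ p.2)
      (∑' n, a n * (x + y) ^ n) := by
  have row (n : ℕ) := (hasSum_choose_mul_pow_mul_pow x y n).mul_left (a n)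
  have row_abs (n : ℕ) := (hasSum_choose_mul_pow_mul_pow |x| |y| n).mul_left |a n|
  have habs : Summable fun p : ℕ × ℕ =>
      |a p.1| * (p.1.choose p.2 * |x| ^ (p.1 - p.2) * |y| ^ p.2) :=
    (summable_prod_of_nonneg fun _ => by positivity).mpr
      ⟨fun n => (row_abs n).summable, by simpa only [(row_abs _).tsum_eq] using ha⟩
  have hsum : Summable fun p : ℕ × ℕ => a p.1 * p.1.choose p.2 * x ^ (p.1 - p.2) * y ^ p.2 :=
    habs.of_norm_bounded fun p => by simp [mul_assoc]
  convert hsum.hasSum using 1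
  exact (hsum.hasSum.prod_fiberwise fun n => by simpa only [mul_assoc] using row n).tsum_eq

lemma HasSum.sum_antidiagonal {α A : Type*} [AddCommMonoid α] [TopologicalSpace α]
    [ContinuousAdd α] [RegularSpace α] [AddCommMonoid A] [HasAntidiagonal A]
    {f : A × A → α} {s : α} (hf : HasSum f s) :
    HasSum (fun n => ∑ p ∈ antidiagonal n, f p) s :=
  (HasAntidiagonal.sigmaAntidiagonalEquivProd.hasSum_iff.mpr hf).sigma fun n => by
    rw [← sum_coe_sort (antidiagonal n)]
    exact hasSum_fintype _

lemma hasFPowerSeriesAt_ofScalars_of_hasSum {𝕜 : Type*} [NontriviallyNormedField 𝕜]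
    {c : ℕ → 𝕜} {f : 𝕜 → 𝕜} {r : ℝ} (hr : 0 < r)
    (hc : ∀ t : 𝕜, ‖t‖ < r → HasSum (fun n => c n * t ^ n) (f t)) :
    HasFPowerSeriesAt f (FormalMultilinearSeries.ofScalars 𝕜 c) 0 := by
  obtain ⟨t₀, ht₀, ht₀r⟩ := NormedField.exists_norm_lt 𝕜 hr
  refine ⟨‖t₀‖₊, ⟨?_, by simpa using ht₀, fun {t} ht => ?_⟩⟩
  · refine FormalMultilinearSeries.le_radius_of_tendsto _ (l := 0) ?_
    simpa [FormalMultilinearSeries.ofScalars_norm, norm_mul, norm_pow] using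
      (hc t₀ ht₀r).summable.tendsto_atTop_zero.norm
  · have ht' : ‖t‖ < r := by
      refine lt_trans ?_ ht₀r
      simpa [Metric.mem_eball, edist_zero_right, ← coe_nnnorm] using ht
    simpa [FormalMultilinearSeries.ofScalars_apply_eq, mul_comm] using hc t ht'

lemma eq_of_hasSum_mul_pow {𝕜 : Type*} [NontriviallyNormedField 𝕜] {a b : ℕ → 𝕜} {f : 𝕜 → 𝕜}
    {r : ℝ} (hr : 0 < r) (ha : ∀ t : 𝕜, ‖t‖ < r → HasSum (fun n => a n * t ^ n) (f t))
    (hb : ∀ t : 𝕜, ‖t‖ < r → HasSum (fun n => b n * t ^ n) (f t)) : a = b :=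
  FormalMultilinearSeries.ofScalars_series_injective 𝕜 𝕜
    ((hasFPowerSeriesAt_ofScalars_of_hasSum hr ha).eq_formalMultilinearSeries
      (hasFPowerSeriesAt_ofScalars_of_hasSum hr hb))

lemma abs_sub_sum_range_le_of_hasSum {c : ℕ → ℝ} {t s : ℝ} (hc : ∀ n, |c n| ≤ 1) (ht₀ : 0 ≤ t)
    (ht₁ : t < 1) (hs : HasSum (fun n => c n * t ^ n) s) (p : ℕ) :
    |s - ∑ n ∈ range p, c n * t ^ n| ≤ t ^ p / (1 - t) := by
  rw [← hs.tsum_eq, ← hs.summable.sum_add_tsum_nat_add p, add_sub_cancel_left, ← Real.norm_eq_abs]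
  refine tsum_of_norm_bounded (g := fun n => t ^ p * t ^ n) ?_ fun n => ?_
  · simpa only [div_eq_mul_inv] using (hasSum_geometric_of_lt_one ht₀ ht₁).mul_left (t ^ p)
  · rw [Real.norm_eq_abs, abs_mul, abs_of_nonneg (pow_nonneg ht₀ _), pow_add, mul_comm (t ^ p)]
    exact mul_le_of_le_one_left (by positivity) (hc _)

noncomputable def invSqrtCoeff (n : ℕ) : ℝ := n.centralBinom / 4 ^ n

lemma invSqrtCoeff_zero : invSqrtCoeff 0 = 1 := by simp [invSqrtCoeff]

lemma invSqrtCoeff_nonneg (n : ℕ) : 0 ≤ invSqrtCoeff n := by unfold invSqrtCoeff; positivity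

lemma two_mul_succ_mul_invSqrtCoeff_succ (n : ℕ) :
    2 * (n + 1) * invSqrtCoeff (n + 1) = (2 * n + 1) * invSqrtCoeff n := by
  have h : ((n + 1 : ℕ) : ℝ) * (n + 1).centralBinom = 2 * (2 * n + 1) * n.centralBinom := by
    exact_mod_cast Nat.succ_mul_centralBinom_succ n
  simp only [invSqrtCoeff, pow_succ]
  push_cast at h
  field_simp
  linear_combination 2 * h

lemma sum_antidiagonal_invSqrtCoeff_mul (n : ℕ) :
    ∑ p ∈ antidiagonal n, invSqrtCoeff p.1 * invSqrtCoeff p.2 = 1 := by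
  induction n with
  | zero => simp [invSqrtCoeff_zero]
  | succ n ih =>
    have key : ((n + 1 : ℕ) : ℝ) * ∑ p ∈ antidiagonal (n + 1), invSqrtCoeff p.1 * invSqrtCoeff p.2
        = (n + 1 : ℕ) := by
      rw [← sum_antidiagonal_two_mul_fst_mul, Nat.sum_antidiagonal_succ]
      calc _ = ∑ p ∈ antidiagonal n, (2 * (p.1 : ℝ) * (invSqrtCoeff p.1 * invSqrtCoeff p.2)
              + invSqrtCoeff p.1 * invSqrtCoeff p.2) := by
            simp only [CharP.cast_eq_zero, mul_zero, zero_mul, zero_add]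
            refine sum_congr rfl fun p _ => ?_
            push_cast
            linear_combination invSqrtCoeff p.2 * two_mul_succ_mul_invSqrtCoeff_succ p.1
        _ = (n + 1 : ℕ) := by
            rw [sum_add_distrib, sum_antidiagonal_two_mul_fst_mul, ih]; push_cast; ring
    exact (mul_eq_left₀ (by positivity)).mp key

lemma invSqrtCoeff_le_one (n : ℕ) : invSqrtCoeff n ≤ 1 := by
  calc invSqrtCoeff n = invSqrtCoeff n * invSqrtCoeff 0 := by rw [invSqrtCoeff_zero, mul_one]
    _ ≤ ∑ p ∈ antidiagonal n, invSqrtCoeff p.1 * invSqrtCoeff p.2 :=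
        single_le_sum (f := fun p : ℕ × ℕ => invSqrtCoeff p.1 * invSqrtCoeff p.2)
          (fun p _ => mul_nonneg (invSqrtCoeff_nonneg _) (invSqrtCoeff_nonneg _))
          (show (n, 0) ∈ antidiagonal n by simp)
    _ = 1 := sum_antidiagonal_invSqrtCoeff_mul n

section Series

variable {𝕜 : Type*} [RCLike 𝕜]

noncomputable def invSqrtSeries (z : 𝕜) : 𝕜 := ∑' n, (invSqrtCoeff n : 𝕜) * z ^ n

lemma norm_invSqrtCoeff_mul_pow_le (z : 𝕜) (n : ℕ) :
    ‖(invSqrtCoeff n : 𝕜) * z ^ n‖ ≤ ‖z‖ ^ n := by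
  rw [norm_mul, norm_pow, RCLike.norm_ofReal, abs_of_nonneg (invSqrtCoeff_nonneg n)]
  exact mul_le_of_le_one_left (by positivity) (invSqrtCoeff_le_one n)

lemma summable_norm_invSqrtCoeff_mul_pow {z : 𝕜} (hz : ‖z‖ < 1) :
    Summable fun n => ‖(invSqrtCoeff n : 𝕜) * z ^ n‖ :=
  (summable_geometric_of_lt_one (norm_nonneg z) hz).of_nonneg_of_le (fun _ => norm_nonneg _)
    (norm_invSqrtCoeff_mul_pow_le z)

lemma invSqrtSeries_mul_self {z : 𝕜} (hz : ‖z‖ < 1) :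
    invSqrtSeries z * invSqrtSeries z = (1 - z)⁻¹ := by
  have hs := summable_norm_invSqrtCoeff_mul_pow hz
  rw [invSqrtSeries, tsum_mul_tsum_eq_tsum_sum_antidiagonal_of_summable_norm hs hs,
    ← tsum_geometric_of_norm_lt_one hz]
  refine tsum_congr fun n => ?_
  calc _ = ∑ p ∈ antidiagonal n, ((invSqrtCoeff p.1 * invSqrtCoeff p.2 : ℝ) : 𝕜) * z ^ n := by
        refine sum_congr rfl fun p hp => ?_
        rw [← mem_antidiagonal.mp hp, pow_add]; push_cast; ring
    _ = z ^ n := by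
        rw [← sum_mul, ← RCLike.ofReal_sum, sum_antidiagonal_invSqrtCoeff_mul, RCLike.ofReal_one,
          one_mul]

lemma norm_invSqrtSeries_sub_one_le {z : 𝕜} (hz : ‖z‖ < 1) :
    ‖invSqrtSeries z - 1‖ ≤ ‖z‖ / (1 - ‖z‖) := by
  have hs := (summable_norm_invSqrtCoeff_mul_pow hz).of_norm
  rw [invSqrtSeries, hs.tsum_eq_zero_add]
  simp only [invSqrtCoeff_zero, pow_zero, RCLike.ofReal_one, mul_one, add_sub_cancel_left]
  refine tsum_of_norm_bounded ?_ fun n => norm_invSqrtCoeff_mul_pow_le z (n + 1)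
  simpa [pow_succ, mul_comm, div_eq_mul_inv] using
    (hasSum_geometric_of_lt_one (norm_nonneg z) hz).mul_left ‖z‖

lemma invSqrtSeries_conj (z : 𝕜) :
    invSqrtSeries (starRingEnd 𝕜 z) = starRingEnd 𝕜 (invSqrtSeries z) := by
  simp only [invSqrtSeries, RCLike.conj_tsum, map_mul, map_pow, RCLike.conj_ofReal]

lemma invSqrtSeries_mul_invSqrtSeries_conj {z : 𝕜} (hz : ‖z‖ < 1) :
    invSqrtSeries z * invSqrtSeries (starRingEnd 𝕜 z) = (‖1 - z‖⁻¹ : ℝ) := by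
  rw [invSqrtSeries_conj, RCLike.mul_conj, sq, ← RCLike.ofReal_mul, ← norm_mul,
    invSqrtSeries_mul_self hz, norm_inv]

lemma invSqrtSeries_eq_inv_sqrt {z : ℝ} (hz : |z| < 1 / 2) :
    invSqrtSeries z = (√(1 - z))⁻¹ := by
  have hz1 : |z| < 1 := by linarith
  have hpos : 0 < invSqrtSeries z := by
    have h := norm_invSqrtSeries_sub_one_le (𝕜 := ℝ) (z := z) hz1
    rw [Real.norm_eq_abs, Real.norm_eq_abs] at h
    have : |z| / (1 - |z|) < 1 := by rw [div_lt_one (by linarith)]; linarith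
    linarith [neg_abs_le (invSqrtSeries z - 1)]
  rw [← Real.sqrt_inv, ← invSqrtSeries_mul_self (𝕜 := ℝ) hz1, Real.sqrt_mul_self hpos.le]

end Series

open Nat in
lemma choose_mul_descFactorial_two_mul {ℓ i : ℕ} (h : i ≤ ℓ) :
    ℓ.choose i * (2 * i).descFactorial ℓ = i.centralBinom * i.choose (ℓ - i) * ℓ ! := by
  rcases le_or_gt ℓ (2 * i) with h2 | h2
  · have h3 := Nat.choose_mul (n := 2 * i) h
    rw [show 2 * i - i = i by omega] at h3
    rw [descFactorial_eq_factorial_mul_choose, centralBinom_eq_two_mul_choose, ← h3]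
    ring
  · rw [descFactorial_eq_zero_iff_lt.mpr h2, choose_eq_zero_of_lt (show i < ℓ - i by omega)]
    simp

open Polynomial in
lemma legendre_eval_eq_sum_range (ℓ : ℕ) (u : ℝ) :
    (legendre ℓ).eval u = ∑ i ∈ range (ℓ + 1), (2 ^ ℓ * ℓ.factorial : ℝ)⁻¹ *
      ((-1) ^ (i + ℓ) * ℓ.choose i * (2 * i).descFactorial ℓ * u ^ (2 * i - ℓ)) := by
  rw [legendre, sub_pow, eval_smul, iterate_derivative_sum, eval_finsetSum, smul_eq_mul, mul_sum]
  refine sum_congr rfl fun i _ => ?_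
  have hterm : ((-1) ^ (i + ℓ) * (X ^ 2) ^ i * 1 ^ (ℓ - i) * (ℓ.choose i : ℝ[X])) =
      C ((-1 : ℝ) ^ (i + ℓ) * ℓ.choose i) * X ^ (2 * i) := by
    simp only [one_pow, mul_one, pow_mul, map_mul, map_pow, map_neg, map_one, map_natCast]; ring
  rw [hterm, iterate_derivative_C_mul, iterate_derivative_X_pow_eq_smul]
  simp only [eval_mul, eval_C, eval_smul, eval_pow, eval_X]
  ring

lemma legendre_eval_eq_sum_antidiagonal (ℓ : ℕ) (u : ℝ) :
    (legendre ℓ).eval u = ∑ p ∈ antidiagonal ℓ,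
      invSqrtCoeff p.1 * p.1.choose p.2 * (2 * u) ^ (p.1 - p.2) * (-1) ^ p.2 := by
  rw [legendre_eval_eq_sum_range, Nat.sum_antidiagonal_eq_sum_range_succ
    (fun n j => invSqrtCoeff n * n.choose j * (2 * u) ^ (n - j) * (-1) ^ j)]
  refine sum_congr rfl fun i hi => ?_
  have hiℓ : i ≤ ℓ := Nat.lt_succ_iff.mp (mem_range.mp hi)
  rcases le_or_gt ℓ (2 * i) with h2 | h2
  · obtain ⟨k, hk⟩ : ∃ k, 2 * i = ℓ + k := ⟨2 * i - ℓ, by omega⟩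
    have hnat : (ℓ.choose i * (2 * i).descFactorial ℓ : ℝ) =
        i.centralBinom * i.choose (ℓ - i) * ℓ.factorial := by
      exact_mod_cast choose_mul_descFactorial_two_mul hiℓ
    have hsign : (-1 : ℝ) ^ (i + ℓ) = (-1) ^ (ℓ - i) := by
      rw [show i + ℓ = 2 * i + (ℓ - i) by omega, pow_add, pow_mul]; norm_num
    have h4 : (4 : ℝ) ^ i = 2 ^ ℓ * 2 ^ k := by
      rw [← pow_add, ← hk, pow_mul]; norm_num
    rw [show 2 * i - ℓ = k by omega, show i - (ℓ - i) = k by omega, hsign,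
      mul_assoc _ (ℓ.choose i : ℝ), hnat, invSqrtCoeff, h4]
    field_simp
    ring
  · rw [Nat.descFactorial_eq_zero_iff_lt.mpr h2, Nat.choose_eq_zero_of_lt (show i < ℓ - i by omega)]
    simp

lemma hasSum_legendre_eval_mul_pow_of_abs_le {u t : ℝ} (hu : |u| ≤ 1) (ht : |t| ≤ 1 / 5) :
    HasSum (fun ℓ => (legendre ℓ).eval u * t ^ ℓ) (√(1 - 2 * t * u + t ^ 2))⁻¹ := by
  set x := 2 * u * t
  set y := -t ^ 2
  have hxy : |x| + |y| < 1 / 2 := by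
    have : |x| ≤ 2 * |t| := by
      simp only [x, abs_mul, abs_two]; nlinarith [abs_nonneg t, abs_nonneg u]
    have : |y| = |t| ^ 2 := by simp [y]
    nlinarith [abs_nonneg t]
  have ha : Summable fun n => |invSqrtCoeff n| * (|x| + |y|) ^ n := by
    simpa [abs_mul, abs_of_nonneg (invSqrtCoeff_nonneg _),
      abs_of_nonneg (by positivity : 0 ≤ |x| + |y|)]
      using summable_norm_invSqrtCoeff_mul_pow (𝕜 := ℝ) (z := |x| + |y|)
        (by rw [Real.norm_eq_abs, abs_of_nonneg (by positivity)]; linarith)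
  have hsum := (hasSum_mul_choose_mul_pow_mul_pow ha).sum_antidiagonal
  have hval : ∑' n, invSqrtCoeff n * (x + y) ^ n = (√(1 - 2 * t * u + t ^ 2))⁻¹ := by
    have := invSqrtSeries_eq_inv_sqrt (z := x + y) ((abs_add_le x y).trans_lt hxy)
    simp only [invSqrtSeries, RCLike.ofReal_real_eq_id, id] at this
    rw [this]; congr 2; ring
  rw [hval] at hsum
  convert hsum using 2 with ℓ
  rw [legendre_eval_eq_sum_antidiagonal, sum_mul]
  refine sum_congr rfl fun p hp => ?_
  rcases le_or_gt p.2 p.1 with h | h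
  · obtain ⟨k, hk⟩ := Nat.exists_eq_add_of_le h
    rw [← mem_antidiagonal.mp hp, hk, Nat.add_sub_cancel_left]
    simp only [x, y]; ring
  · rw [Nat.choose_eq_zero_of_lt h]; simp

noncomputable def legendreOnCircle (w : ℂ) (ℓ : ℕ) : ℂ :=
  ∑ p ∈ antidiagonal ℓ,
    ((invSqrtCoeff p.1 * invSqrtCoeff p.2 : ℝ) : ℂ) * w ^ p.1 * (starRingEnd ℂ w) ^ p.2

lemma norm_legendreOnCircle_le {w : ℂ} (hw : ‖w‖ = 1) (ℓ : ℕ) : ‖legendreOnCircle w ℓ‖ ≤ 1 := by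
  refine (norm_sum_le _ _).trans_eq ?_
  rw [← sum_antidiagonal_invSqrtCoeff_mul ℓ]
  refine sum_congr rfl fun p _ => ?_
  simp [hw, abs_of_nonneg (invSqrtCoeff_nonneg _)]

lemma hasSum_legendreOnCircle_mul_pow {w : ℂ} (hw : ‖w‖ = 1) {t : ℝ} (ht : |t| < 1) :
    HasSum (fun ℓ => legendreOnCircle w ℓ * t ^ ℓ) (‖1 - t * w‖⁻¹ : ℝ) := by
  set z : ℂ := t * w
  have hz : ‖z‖ < 1 := by simpa [z, hw] using ht
  have hzc : ‖starRingEnd ℂ z‖ < 1 := by rwa [Complex.norm_conj]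
  have hs := summable_norm_invSqrtCoeff_mul_pow hz
  have hsc := summable_norm_invSqrtCoeff_mul_pow hzc
  have hterm (ℓ : ℕ) : ∑ p ∈ antidiagonal ℓ, ((invSqrtCoeff p.1 : ℂ) * z ^ p.1) *
      ((invSqrtCoeff p.2 : ℂ) * (starRingEnd ℂ z) ^ p.2) = legendreOnCircle w ℓ * t ^ ℓ := by
    rw [legendreOnCircle, sum_mul]
    refine sum_congr rfl fun p hp => ?_
    rw [← mem_antidiagonal.mp hp]
    simp only [z, map_mul, Complex.conj_ofReal]
    push_cast; ring
  have hsum := (summable_norm_sum_mul_antidiagonal_of_summable_norm hs hsc).of_norm.hasSum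
  rw [← tsum_mul_tsum_eq_tsum_sum_antidiagonal_of_summable_norm hs hsc] at hsum
  have hval := invSqrtSeries_mul_invSqrtSeries_conj hz
  simp only [invSqrtSeries, RCLike.ofReal_eq_complex_ofReal] at hval
  rw [← hval]
  simpa only [RCLike.ofReal_eq_complex_ofReal, hterm] using hsum

lemma sq_norm_one_sub_ofReal_mul {w : ℂ} (hw : ‖w‖ = 1) (t : ℝ) :
    ‖1 - t * w‖ ^ 2 = 1 - 2 * t * w.re + t ^ 2 := by
  have hw2 : w.re * w.re + w.im * w.im = 1 := by
    rw [← Complex.normSq_apply, ← Complex.sq_norm, hw, one_pow]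
  rw [Complex.sq_norm, Complex.normSq_apply]
  simp only [Complex.sub_re, Complex.one_re, Complex.mul_re, Complex.ofReal_re,
    Complex.ofReal_im, Complex.sub_im, Complex.one_im, Complex.mul_im]
  linear_combination t ^ 2 * hw2

lemma legendre_eval_re_eq_re_legendreOnCircle {w : ℂ} (hw : ‖w‖ = 1) (ℓ : ℕ) :
    (legendre ℓ).eval w.re = (legendreOnCircle w ℓ).re := by
  have hre : |w.re| ≤ 1 := hw ▸ Complex.abs_re_le_norm w
  refine congrFun (eq_of_hasSum_mul_pow (a := fun ℓ => (legendre ℓ).eval w.re)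
    (b := fun ℓ => (legendreOnCircle w ℓ).re) (f := fun t : ℝ => ‖1 - t * w‖⁻¹) (r := 1 / 5)
    (by norm_num) (fun t ht => ?_) (fun t ht => ?_)) ℓ
  · rw [Real.norm_eq_abs] at ht
    rw [← Real.sqrt_sq (norm_nonneg _), sq_norm_one_sub_ofReal_mul hw]
    exact hasSum_legendre_eval_mul_pow_of_abs_le hre ht.le
  · rw [Real.norm_eq_abs] at ht
    simpa only [← Complex.ofReal_pow, Complex.re_mul_ofReal, Complex.ofReal_re] using
      Complex.hasSum_re (hasSum_legendreOnCircle_mul_pow hw (t := t) (by linarith))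

lemma exists_norm_eq_one_re_eq {u : ℝ} (hu : |u| ≤ 1) : ∃ w : ℂ, ‖w‖ = 1 ∧ w.re = u := by
  refine ⟨⟨u, √(1 - u ^ 2)⟩, ?_, rfl⟩
  have h : 0 ≤ 1 - u ^ 2 := by nlinarith [abs_le.mp hu]
  rw [← pow_eq_one_iff_of_nonneg (norm_nonneg _) two_ne_zero, Complex.sq_norm,
    Complex.normSq_mk, ← sq, ← sq, Real.sq_sqrt h]
  ring

lemma abs_legendre_eval_le_one {u : ℝ} (hu : |u| ≤ 1) (ℓ : ℕ) : |(legendre ℓ).eval u| ≤ 1 := by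
  obtain ⟨w, hw, rfl⟩ := exists_norm_eq_one_re_eq hu
  rw [legendre_eval_re_eq_re_legendreOnCircle hw]
  exact (Complex.abs_re_le_norm _).trans (norm_legendreOnCircle_le hw ℓ)

lemma hasSum_legendre_eval_mul_pow {u t : ℝ} (hu : |u| ≤ 1) (ht : |t| < 1) :
    HasSum (fun ℓ => (legendre ℓ).eval u * t ^ ℓ) (√(1 - 2 * t * u + t ^ 2))⁻¹ := by
  obtain ⟨w, hw, rfl⟩ := exists_norm_eq_one_re_eq hu
  rw [← sq_norm_one_sub_ofReal_mul hw, Real.sqrt_sq (norm_nonneg _)]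
  simpa only [legendre_eval_re_eq_re_legendreOnCircle hw, ← Complex.ofReal_pow,
    Complex.re_mul_ofReal, Complex.ofReal_re] using
    Complex.hasSum_re (hasSum_legendreOnCircle_mul_pow hw ht)

lemma norm_sub_eq_norm_mul_sqrt {F : Type*} [NormedAddCommGroup F] [InnerProductSpace ℝ F]
    {x y : F} (hx : x ≠ 0) (hy : y ≠ 0) :
    ‖x - y‖ = ‖x‖ * √(1 - 2 * (‖y‖ / ‖x‖) * (inner ℝ x y / (‖x‖ * ‖y‖)) + (‖y‖ / ‖x‖) ^ 2) := by
  have hx' : ‖x‖ ≠ 0 := norm_ne_zero_iff.mpr hx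
  have hy' : ‖y‖ ≠ 0 := norm_ne_zero_iff.mpr hy
  have hsq : ‖x - y‖ ^ 2 =
      ‖x‖ ^ 2 * (1 - 2 * (‖y‖ / ‖x‖) * (inner ℝ x y / (‖x‖ * ‖y‖)) + (‖y‖ / ‖x‖) ^ 2) := by
    rw [norm_sub_sq_real]; field_simp
  rw [← Real.sqrt_sq (norm_nonneg (x - y)), hsq, Real.sqrt_mul (sq_nonneg _),
    Real.sqrt_sq (norm_nonneg x)]

/-- Truncated multipole expansion estimate for the 3D Laplace kernel (used in the
proof of Lemma 1 of the paper). -/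
theorem multipole_truncation_bound (x y : EuclideanSpace ℝ (Fin 3))
    (hy : 0 < ‖y‖) (hxy : ‖y‖ < ‖x‖) (p : ℕ) :
    |1 / ‖x - y‖ -
        ∑ ℓ ∈ Finset.range (p + 1), ‖y‖ ^ ℓ / ‖x‖ ^ (ℓ + 1) *
          (legendre ℓ).eval ((inner ℝ x y : ℝ) / (‖x‖ * ‖y‖))| ≤
      1 / (‖x‖ - ‖y‖) * (‖y‖ / ‖x‖) ^ (p + 1) := by
  have hx : 0 < ‖x‖ := hy.trans hxy
  set t := ‖y‖ / ‖x‖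
  set u := (inner ℝ x y : ℝ) / (‖x‖ * ‖y‖)
  have hu : |u| ≤ 1 := abs_real_inner_div_norm_mul_norm_le_one x y
  have ht₀ : 0 ≤ t := by positivity
  have ht₁ : t < 1 := (div_lt_one hx).mpr hxy
  have htail := abs_sub_sum_range_le_of_hasSum (abs_legendre_eval_le_one hu) ht₀ ht₁
    (hasSum_legendre_eval_mul_pow hu (by rwa [abs_of_nonneg ht₀])) (p + 1)
  have hexpand : 1 / ‖x - y‖ - ∑ ℓ ∈ range (p + 1), ‖y‖ ^ ℓ / ‖x‖ ^ (ℓ + 1) * (legendre ℓ).eval u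
      = ((√(1 - 2 * t * u + t ^ 2))⁻¹ - ∑ ℓ ∈ range (p + 1), (legendre ℓ).eval u * t ^ ℓ)
        / ‖x‖ := by
    rw [norm_sub_eq_norm_mul_sqrt (norm_pos_iff.mp hx) (norm_pos_iff.mp hy), sub_div, sum_div]
    congr 1
    · ring
    · refine sum_congr rfl fun ℓ _ => ?_
      simp only [t, div_pow, pow_succ]
      field_simp
  rw [hexpand, abs_div, abs_of_pos hx]
  calc _ ≤ t ^ (p + 1) / (1 - t) / ‖x‖ := by gcongr
    _ = 1 / (‖x‖ - ‖y‖) * t ^ (p + 1) := by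
        have : ‖x‖ - ‖y‖ ≠ 0 := by linarith
        simp only [t]; field_simp
end
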